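/- arXiv:0807.1031 — 5 statements merged into one kernel-verified Lean document; each statement's English description precedes it below -/
import Mathlib

section
/- Let φ : ℚ[T,X,Y] → ℚ[x,y,z] be the ℚ-algebra homomorphism determined by T ↦ z, X ↦ x², Y ↦ y² + 2xz. For every integer ℓ ≥ 1, the induced ring homomorphism ℚ[T,X,Y]/⟨T·∏_{i=1}^{ℓ}(T² + i⁴X − i²Y)⟩ → ℚ[x,y,z]/⟨z·∏_{i=1}^{ℓ}((z − i²x)² − i²y²)⟩ is injective; that is, if g ∈ ℚ[T,X,Y] satisfies φ(g) ∈ ⟨z·∏_{i=1}^{ℓ}((z − i²x)² − i²y²)⟩, then g ∈ ⟨T·∏_{i=1}^{ℓ}(T² + i⁴X − i²Y)⟩. -/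
/-!
The source generator is, up to a unit, `T · ∏ᵢ (Y − (T²/i² + i²X))`, a product of pairwise
non-associated primes, each of the form `X k − p` with `p` free of `X k`; such a prime divides `g`
iff substituting `p` for `X k` kills `g`. For each of them we find an endomorphism `ψ` of the target
ring that kills a factor of the target generator and such that `ψ ∘ φ` is that substitution
followed by an injective map (a renaming of variables and then `X j ↦ X j ²`): `z ↦ 0` for `T`,
and `(x, y, z) ↦ (x, (y² − i²x)/i, y²)`, a point of the branch `z − i²x = i y`, for the `i`-th
factor; taking `y²` rather than `y` is what makes `ψ ∘ φ` factor through `expand 2`.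
-/

open MvPolynomial Finset

/-- The ℚ-algebra homomorphism ℚ[T,X,Y] → ℚ[x,y,z] (both modeled as
`MvPolynomial (Fin 3) ℚ`, with `T = X 0, X = X 1, Y = X 2` in the source and
`x = X 0, y = X 1, z = X 2` in the target) determined by
`T ↦ z`, `X ↦ x²`, `Y ↦ y² + 2xz`. -/
noncomputable def phi : MvPolynomial (Fin 3) ℚ →ₐ[ℚ] MvPolynomial (Fin 3) ℚ :=
  aeval ![X 2, X 0 ^ 2, X 1 ^ 2 + 2 * X 0 * X 2]

namespace MvPolynomial

theorem C_mul_C_inv {σ K : Type*} [Field K] {a : K} (ha : a ≠ 0) :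
    (C a : MvPolynomial σ K) * C a⁻¹ = 1 := by
  rw [← C_mul, mul_inv_cancel₀ ha, C_1]

variable {σ R : Type*} [CommRing R] [DecidableEq σ]

theorem X_sub_dvd_sub_aeval_update (k : σ) (p f : MvPolynomial σ R) :
    X k - p ∣ f - aeval (Function.update X k p) f := by
  rw [← Ideal.mem_span_singleton, ← Ideal.Quotient.eq]
  change Ideal.Quotient.mkₐ R _ f = (Ideal.Quotient.mkₐ R _).comp (aeval _) f
  congr 1
  refine algHom_ext fun j => ?_
  rcases eq_or_ne j k with rfl | hj
  · simp [Ideal.Quotient.eq]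
  · simp [Function.update_of_ne hj]

theorem aeval_update_of_notMem_vars {k : σ} (p : MvPolynomial σ R) {f : MvPolynomial σ R}
    (hf : k ∉ f.vars) : aeval (Function.update X k p) f = f := by
  conv_rhs => rw [← aeval_X_left_apply f]
  exact eval₂Hom_congr' rfl
    (fun i hi _ => Function.update_of_ne (ne_of_mem_of_not_mem hi hf) _ _) rfl

theorem X_sub_dvd_iff_aeval_update_eq_zero {k : σ} {p : MvPolynomial σ R} (hp : k ∉ p.vars)
    (f : MvPolynomial σ R) : X k - p ∣ f ↔ aeval (Function.update X k p) f = 0 := by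
  constructor
  · rintro ⟨m, rfl⟩
    rw [map_mul, map_sub, aeval_X, Function.update_self, aeval_update_of_notMem_vars p hp,
      sub_self, zero_mul]
  · intro h
    simpa only [h, sub_zero] using X_sub_dvd_sub_aeval_update k p f

theorem prime_X_sub [IsDomain R] {k : σ} {p : MvPolynomial σ R} (hp : k ∉ p.vars) :
    Prime (X k - p) := by
  simp only [Prime, isUnit_iff_dvd_one, X_sub_dvd_iff_aeval_update_eq_zero hp, map_mul,
    mul_eq_zero, map_one, one_ne_zero, not_false_eq_true, true_and]
  refine ⟨fun h => hp ?_, fun _ _ => id⟩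
  rw [← sub_eq_zero.mp h, vars_X]
  exact Finset.mem_singleton_self k

end MvPolynomial

theorem eq_zero_of_mem_span_of_comp_eq {R A B S T : Type*} [CommSemiring R] [CommSemiring A]
    [CommSemiring B] [CommSemiring S] [CommSemiring T] [Algebra R A] [Algebra R B] [Algebra R S]
    [Algebra R T] {φ : A →ₐ[R] B} {ψ : B →ₐ[R] S} {ρ : A →ₐ[R] T} {ε : T →ₐ[R] S}
    (hε : Function.Injective ε) (h : ψ.comp φ = ε.comp ρ) {r : B} (hr : ψ r = 0) {g : A}
    (hg : φ g ∈ Ideal.span {r}) : ρ g = 0 := by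
  obtain ⟨w, hw⟩ := Ideal.mem_span_singleton.mp hg
  apply hε
  rw [← AlgHom.comp_apply, ← h, AlgHom.comp_apply, hw, map_mul, hr, zero_mul, map_zero]

noncomputable def targetRel (ℓ : ℕ) : MvPolynomial (Fin 3) ℚ :=
  X 2 * ∏ i ∈ Icc 1 ℓ, ((X 2 - C ((i : ℚ) ^ 2) * X 0) ^ 2 - C ((i : ℚ) ^ 2) * X 1 ^ 2)

noncomputable def rootY (i : ℕ) : MvPolynomial (Fin 3) ℚ :=
  C ((i : ℚ) ^ 2)⁻¹ * X 0 ^ 2 + C ((i : ℚ) ^ 2) * X 1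

noncomputable def branchSubst (i : ℕ) : MvPolynomial (Fin 3) ℚ →ₐ[ℚ] MvPolynomial (Fin 3) ℚ :=
  aeval ![X 0, C (i : ℚ)⁻¹ * (X 1 ^ 2 - C ((i : ℚ) ^ 2) * X 0), X 1 ^ 2]

theorem vars_rootY_subset (i : ℕ) : (rootY i).vars ⊆ {0, 1} := by
  refine (vars_add_subset _ _).trans
    (union_subset ((vars_mul _ _).trans ?_) ((vars_mul _ _).trans ?_))
  · rw [vars_C, empty_union]
    exact (vars_pow _ _).trans (by simp [vars_X])
  · rw [vars_C, empty_union, vars_X]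
    simp

theorem two_notMem_vars_rootY (i : ℕ) : (2 : Fin 3) ∉ (rootY i).vars :=
  fun h => absurd (vars_rootY_subset i h) (by decide)

theorem prime_X_sub_rootY (i : ℕ) : Prime (X 2 - rootY i) :=
  prime_X_sub (two_notMem_vars_rootY i)

theorem associated_X_sub_rootY {i : ℕ} (hi : i ≠ 0) :
    Associated (X 2 - rootY i) (X 0 ^ 2 + C ((i : ℚ) ^ 4) * X 1 - C ((i : ℚ) ^ 2) * X 2) := by
  have hsq : (C ((i : ℚ) ^ 4) : MvPolynomial (Fin 3) ℚ) = C ((i : ℚ) ^ 2) * C ((i : ℚ) ^ 2) := by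
    rw [← C_mul, ← pow_add]
  have hu : IsUnit (C (-(i : ℚ) ^ 2) : MvPolynomial (Fin 3) ℚ) :=
    (isUnit_iff_ne_zero.mpr (neg_ne_zero.mpr (by positivity))).map C
  convert associated_mul_unit_right _ _ hu using 1
  rw [rootY, hsq, map_neg]
  linear_combination -X 0 ^ 2 * C_mul_C_inv (σ := Fin 3) (a := (i : ℚ) ^ 2) (by positivity)

theorem not_dvd_X_sub_rootY {i j : ℕ} (hij : i ≠ j) : ¬ X 2 - rootY i ∣ X 2 - rootY j := by
  rw [X_sub_dvd_iff_aeval_update_eq_zero (two_notMem_vars_rootY i), map_sub, aeval_X,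
    Function.update_self, aeval_update_of_notMem_vars _ (two_notMem_vars_rootY j)]
  intro h
  have hsq : (i : ℚ) ^ 2 - j ^ 2 = 0 := by simpa [rootY] using congrArg (eval ![0, 1, 0]) h
  rw [sub_eq_zero, pow_left_inj₀ (Nat.cast_nonneg i) (Nat.cast_nonneg j) two_ne_zero] at hsq
  exact hij (Nat.cast_injective hsq)

theorem X_sub_rootY_not_dvd_X_zero (i : ℕ) : ¬ X 2 - rootY i ∣ X 0 := by
  rw [X_sub_dvd_iff_aeval_update_eq_zero (two_notMem_vars_rootY i), aeval_X,
    Function.update_of_ne (by decide)]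
  exact X_ne_zero 0

theorem aeval_update_two_zero_comp_phi : (aeval (Function.update X 2 0)).comp phi =
    ((expand 2).comp (rename (finRotate 3).symm)).comp (aeval (Function.update X 0 0)) := by
  refine algHom_ext fun j => ?_
  fin_cases j <;> simp [phi, Function.update]

theorem branchSubst_comp_phi {i : ℕ} (hi : i ≠ 0) : (branchSubst i).comp phi =
    ((expand 2).comp (rename (Equiv.swap 0 1))).comp (aeval (Function.update X 2 (rootY i))) := by
  refine algHom_ext fun j => ?_
  fin_cases j
  · simp [branchSubst, phi, Function.update]
  · simp [branchSubst, phi, Function.update]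
  · simp only [Fin.reduceFinMk, Fin.isValue, branchSubst, phi, rootY, AlgHom.comp_apply, aeval_X,
      map_add, map_mul, map_pow, map_ofNat, Function.update_self, Matrix.cons_val, rename_X,
      expand_X, rename_C, expand_C, Equiv.swap_apply_left, Equiv.swap_apply_right, ← inv_pow]
    linear_combination (C (i : ℚ) * C (i : ℚ)⁻¹ + 1) * (C (i : ℚ) ^ 2 * X 0 ^ 2 - 2 * X 0 * X 1 ^ 2)
      * C_mul_C_inv (σ := Fin 3) (a := (i : ℚ)) (by positivity)

theorem branchSubst_targetRel {ℓ i : ℕ} (hi : i ∈ Icc 1 ℓ) : branchSubst i (targetRel ℓ) = 0 := by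
  have hi0 : (i : ℚ) ≠ 0 := by have := (mem_Icc.mp hi).1; positivity
  rw [targetRel, map_mul, map_prod, prod_eq_zero hi, mul_zero]
  simp only [branchSubst, map_sub, map_mul, map_pow, aeval_X, aeval_C, algebraMap_eq,
    Matrix.cons_val]
  linear_combination -(C (i : ℚ) * C (i : ℚ)⁻¹ + 1) * (X 1 ^ 2 - C (i : ℚ) ^ 2 * X 0) ^ 2
    * C_mul_C_inv (σ := Fin 3) hi0

theorem X_zero_dvd_of_phi_mem_span {ℓ : ℕ} {g : MvPolynomial (Fin 3) ℚ}
    (hg : phi g ∈ Ideal.span {targetRel ℓ}) : X 0 ∣ g := by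
  have hinj : Function.Injective ((expand 2).comp (rename (finRotate 3).symm) :
      MvPolynomial (Fin 3) ℚ →ₐ[ℚ] MvPolynomial (Fin 3) ℚ) := by
    rw [AlgHom.coe_comp]
    exact (expand_injective two_pos).comp (rename_injective _ (finRotate 3).symm.injective)
  have hz : aeval (Function.update X 2 (0 : MvPolynomial (Fin 3) ℚ)) (targetRel ℓ) = 0 := by
    rw [targetRel, map_mul, aeval_X, Function.update_self, zero_mul]
  have h0 : (0 : Fin 3) ∉ (0 : MvPolynomial (Fin 3) ℚ).vars := by simp
  simpa only [sub_zero] using (X_sub_dvd_iff_aeval_update_eq_zero h0 g).mpr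
    (eq_zero_of_mem_span_of_comp_eq hinj aeval_update_two_zero_comp_phi hz hg)

theorem X_sub_rootY_dvd_of_phi_mem_span {ℓ i : ℕ} (hi : i ∈ Icc 1 ℓ)
    {g : MvPolynomial (Fin 3) ℚ} (hg : phi g ∈ Ideal.span {targetRel ℓ}) :
    X 2 - rootY i ∣ g := by
  have hinj : Function.Injective ((expand 2).comp (rename (Equiv.swap 0 1)) :
      MvPolynomial (Fin 3) ℚ →ₐ[ℚ] MvPolynomial (Fin 3) ℚ) := by
    rw [AlgHom.coe_comp]
    exact (expand_injective two_pos).comp (rename_injective _ (Equiv.swap 0 1).injective)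
  rw [X_sub_dvd_iff_aeval_update_eq_zero (two_notMem_vars_rootY i)]
  exact eq_zero_of_mem_span_of_comp_eq hinj
    (branchSubst_comp_phi (Nat.one_le_iff_ne_zero.mp (mem_Icc.mp hi).1))
    (branchSubst_targetRel hi) hg

theorem induced_map_injective_general (ℓ : ℕ) (g : MvPolynomial (Fin 3) ℚ)
    (hg : phi g ∈ Ideal.span {(X 2 : MvPolynomial (Fin 3) ℚ) * ∏ i ∈ Icc 1 ℓ,
        ((X 2 - C ((i : ℚ) ^ 2) * X 0) ^ 2 - C ((i : ℚ) ^ 2) * X 1 ^ 2)}) :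
    g ∈ Ideal.span {(X 0 : MvPolynomial (Fin 3) ℚ) * ∏ i ∈ Icc 1 ℓ,
        (X 0 ^ 2 + C ((i : ℚ) ^ 4) * X 1 - C ((i : ℚ) ^ 2) * X 2)} := by
  have hassoc : Associated (X 0 * ∏ i ∈ Icc 1 ℓ, (X 2 - rootY i))
      (X 0 * ∏ i ∈ Icc 1 ℓ, (X 0 ^ 2 + C ((i : ℚ) ^ 4) * X 1 - C ((i : ℚ) ^ 2) * X 2)) :=
    (Associated.prod _ _ _ fun i hi =>
      associated_X_sub_rootY (Nat.one_le_iff_ne_zero.mp (mem_Icc.mp hi).1)).mul_left _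
  rw [Ideal.mem_span_singleton, ← hassoc.dvd_iff_dvd_left]
  refine IsRelPrime.mul_dvd ?_ (X_zero_dvd_of_phi_mem_span hg)
    (prod_dvd_of_isRelPrime ?_ fun i hi => X_sub_rootY_dvd_of_phi_mem_span hi hg)
  · exact IsRelPrime.prod_right fun i _ =>
      ((prime_X_sub_rootY i).irreducible.isRelPrime_iff_not_dvd.mpr
        (X_sub_rootY_not_dvd_X_zero i)).symm
  · exact fun i _ j _ hij => (prime_X_sub_rootY i).irreducible.isRelPrime_iff_not_dvd.mpr
      (not_dvd_X_sub_rootY hij)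

/-- The induced map
`ℚ[T,X,Y]/⟨T·∏_{i=1}^{ℓ}(T² + i⁴X − i²Y)⟩ → ℚ[x,y,z]/⟨z·∏_{i=1}^{ℓ}((z − i²x)² − i²y²)⟩`
is injective: if `φ(g)` lies in the target relation ideal, then `g` lies in the
source relation ideal. -/
theorem induced_map_injective (ℓ : ℕ) (hℓ : 1 ≤ ℓ) (g : MvPolynomial (Fin 3) ℚ)
    (hg : phi g ∈ Ideal.span {(X 2 : MvPolynomial (Fin 3) ℚ) * ∏ i ∈ Icc 1 ℓ,
        ((X 2 - C ((i : ℚ) ^ 2) * X 0) ^ 2 - C ((i : ℚ) ^ 2) * X 1 ^ 2)}) :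
    g ∈ Ideal.span {(X 0 : MvPolynomial (Fin 3) ℚ) * ∏ i ∈ Icc 1 ℓ,
        (X 0 ^ 2 + C ((i : ℚ) ^ 4) * X 1 - C ((i : ℚ) ^ 2) * X 2)} :=
  induced_map_injective_general ℓ g hg
end

section
/- For every integer k ≥ 1, consider the ℚ-algebra homomorphism ℚ[x,y,z] → ℚ[u,v] determined by x ↦ u − v, y ↦ k·u − (k+1)·v, z ↦ k·v. This homomorphism is surjective and its kernel is the principal ideal generated by z − k²x + ky. -/
open MvPolynomial

/-- The ℚ-algebra homomorphism ℚ[x,y,z] → ℚ[u,v] (with `x = X 0, y = X 1, z = X 2`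
in the source and `u = X 0, v = X 1` in the target) determined by
`x ↦ u − v`, `y ↦ k·u − (k+1)·v`, `z ↦ k·v`. -/
noncomputable def psiOdd (k : ℕ) : MvPolynomial (Fin 3) ℚ →ₐ[ℚ] MvPolynomial (Fin 2) ℚ :=
  aeval ![X 0 - X 1, C (k : ℚ) * X 0 - C ((k : ℚ) + 1) * X 1, C (k : ℚ) * X 1]

/-- A right inverse: `u ↦ (k+1)x − y`, `v ↦ kx − y`. -/
noncomputable def phiInv (k : ℕ) : MvPolynomial (Fin 2) ℚ →ₐ[ℚ] MvPolynomial (Fin 3) ℚ :=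
  aeval ![C ((k : ℚ) + 1) * X 0 - X 1, C (k : ℚ) * X 0 - X 1]

lemma psiOdd_comp_phiInv (k : ℕ) :
    (psiOdd k).comp (phiInv k) = AlgHom.id ℚ (MvPolynomial (Fin 2) ℚ) := by
  apply MvPolynomial.algHom_ext
  intro i
  fin_cases i <;> simp [psiOdd, phiInv] <;> ring

lemma phiInv_psiOdd_X0 (k : ℕ) : phiInv k (psiOdd k (X 0)) = X 0 := by
  simp [psiOdd, phiInv]; ring

lemma phiInv_psiOdd_X1 (k : ℕ) : phiInv k (psiOdd k (X 1)) = X 1 := by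
  simp [psiOdd, phiInv]; ring

lemma phiInv_psiOdd_X2 (k : ℕ) :
    phiInv k (psiOdd k (X 2)) = C ((k : ℚ) ^ 2) * X 0 - C (k : ℚ) * X 1 := by
  simp [psiOdd, phiInv]; ring

/-- For `k ≥ 1`, the homomorphism `x ↦ u − v, y ↦ ku − (k+1)v, z ↦ kv` is surjective
and its kernel is the principal ideal `⟨z − k²x + ky⟩`. -/
theorem psiOdd_surjective_and_ker (k : ℕ) (hk : 1 ≤ k) :
    Function.Surjective (psiOdd k) ∧
    RingHom.ker (psiOdd k) =
      Ideal.span {(X 2 : MvPolynomial (Fin 3) ℚ) - C ((k : ℚ) ^ 2) * X 0 +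
        C (k : ℚ) * X 1} := by
  set f : MvPolynomial (Fin 3) ℚ :=
    X 2 - C ((k : ℚ) ^ 2) * X 0 + C (k : ℚ) * X 1 with hf
  have hsurj : Function.Surjective (psiOdd k) := by
    intro p
    refine ⟨phiInv k p, ?_⟩
    have := congrArg (fun g => g p) (psiOdd_comp_phiInv k)
    simpa using this
  refine ⟨hsurj, ?_⟩
  set I : Ideal (MvPolynomial (Fin 3) ℚ) := Ideal.span {f} with hI
  have hfI : f ∈ I := Ideal.subset_span rfl
  have hfker : psiOdd k f = 0 := by
    simp [psiOdd, hf]; ring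
  -- g : ℚ[u,v] → ℚ[x,y,z]/I
  set g : MvPolynomial (Fin 2) ℚ →ₐ[ℚ] MvPolynomial (Fin 3) ℚ ⧸ I :=
    (Ideal.Quotient.mkₐ ℚ I).comp (phiInv k) with hg
  have hcomp : g.comp (psiOdd k) = Ideal.Quotient.mkₐ ℚ I := by
    apply MvPolynomial.algHom_ext
    intro i
    fin_cases i
    · show g (psiOdd k (X 0)) = Ideal.Quotient.mkₐ ℚ I (X 0)
      simp only [hg, AlgHom.comp_apply, phiInv_psiOdd_X0]
    · show g (psiOdd k (X 1)) = Ideal.Quotient.mkₐ ℚ I (X 1)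
      simp only [hg, AlgHom.comp_apply, phiInv_psiOdd_X1]
    · show g (psiOdd k (X 2)) = Ideal.Quotient.mkₐ ℚ I (X 2)
      simp only [hg, AlgHom.comp_apply, phiInv_psiOdd_X2, Ideal.Quotient.mkₐ_eq_mk]
      rw [Ideal.Quotient.mk_eq_mk_iff_sub_mem]
      have : C ((k : ℚ) ^ 2) * X 0 - C (k : ℚ) * X 1 - X 2 = -f := by
        rw [hf]; ring
      rw [this]
      exact neg_mem hfI
  ext p
  constructor
  · intro hp
    have hp0 : psiOdd k p = 0 := hp
    have h1 : Ideal.Quotient.mkₐ ℚ I p = g (psiOdd k p) :=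
      (congrArg (fun h => h p) hcomp).symm
    rw [hp0, map_zero] at h1
    exact (Ideal.Quotient.eq_zero_iff_mem).mp h1
  · intro hp
    have : I ≤ RingHom.ker (psiOdd k) := by
      rw [hI, Ideal.span_le, Set.singleton_subset_iff]
      exact hfker
    exact this hp
end

section
/- In the polynomial ring ℚ[x,y,z], the monomial xy does NOT belong to the ideal generated by z, x², and y² + 2xz. -/
open MvPolynomial

set_option synthInstance.maxHeartbeats 1000000
set_option maxHeartbeats 2000000

open TrivSqZeroExt DualNumber in
/-- In ℚ[x,y,z] (with `x = X 0, y = X 1, z = X 2`), the monomial `xy` does not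
belong to the ideal `⟨z, x², y² + 2xz⟩`. -/
theorem xy_not_mem_span :
    (X 0 : MvPolynomial (Fin 3) ℚ) * X 1 ∉
      Ideal.span {(X 2 : MvPolynomial (Fin 3) ℚ), X 0 ^ 2,
        X 1 ^ 2 + 2 * X 0 * X 2} := by
  intro h
  set f : MvPolynomial (Fin 3) ℚ →+* DualNumber (DualNumber ℚ) :=
    (aeval (R := ℚ) ![inl (ε : DualNumber ℚ), (ε : DualNumber (DualNumber ℚ)), 0]).toRingHom with hf
  have hker : Ideal.span {(X 2 : MvPolynomial (Fin 3) ℚ), X 0 ^ 2,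
      X 1 ^ 2 + 2 * X 0 * X 2} ≤ RingHom.ker f := by
    rw [Ideal.span_le]
    rintro p hp
    simp only [Set.mem_insert_iff, Set.mem_singleton_iff] at hp
    rcases hp with rfl | rfl | rfl <;>
      simp [hf, RingHom.mem_ker, sq, ← inl_mul, eps_mul_eps]
  have h0 : f (X 0 * X 1) = 0 := hker h
  simp only [hf, map_mul, AlgHom.toRingHom_eq_coe, RingHom.coe_coe, aeval_X,
    Matrix.cons_val_zero, Matrix.cons_val_one, Matrix.head_cons] at h0
  rw [show (ε : DualNumber (DualNumber ℚ)) = inr 1 from rfl, inl_mul_inr] at h0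
  have h1 : ((inr ((ε : DualNumber ℚ) • (1 : DualNumber ℚ)) :
      DualNumber (DualNumber ℚ))).snd = (ε : DualNumber ℚ) := by
    simp
  rw [h0] at h1
  have h2 : ((ε : DualNumber ℚ)).snd = (1 : ℚ) := rfl
  rw [← h1] at h2
  simp at h2
end

section
/- Let ℓ ≥ 1 be an integer. In ℚ[x,y,z] set ρ = z·(z − ℓ²x + ℓy)·∏_{i=1}^{ℓ−1}((z − i²x)² − i²y²) (a homogeneous polynomial of degree 2ℓ) and Π = ∏_{i=1}^{ℓ}((z − i²x)² − i²y²) (also homogeneous of degree 2ℓ). Suppose c ∈ ℚ and h₁, h₂ ∈ ℚ[x,y,z] are homogeneous of degree 2ℓ − 2, and that the following three elements lie in the principal ideal ⟨ρ⟩: z·h₁, z·h₂, and c·Π − x²·h₁ − (y² + 2xz)·h₂. Then c = 0, h₁ = 0, and h₂ = 0. -/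
/-!
`ρ` is homogeneous of degree `2ℓ`, while `z·h₁` and `z·h₂` are homogeneous of the smaller
degree `2ℓ − 1`; a nonzero multiple of `ρ` has degree at least `2ℓ`, so `z·h₁ = z·h₂ = 0`.
Then `c·Π ∈ ⟨ρ⟩`, and evaluating at `(x, y, z) = (1, 0, 0)`, where `ρ` vanishes through its
factor `z` but `Π = ∏ i⁴ ≠ 0`, gives `c = 0`.
-/

open MvPolynomial Finset

namespace MvPolynomial

variable {σ R : Type*} [CommRing R]

theorem IsHomogeneous.prod_of_forall {ι : Type*} {d : ℕ} (s : Finset ι)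
    (f : ι → MvPolynomial σ R) (hf : ∀ i ∈ s, (f i).IsHomogeneous d) :
    (∏ i ∈ s, f i).IsHomogeneous (#s * d) := by
  simpa using IsHomogeneous.prod s f (fun _ => d) hf

theorem isHomogeneous_sq_sub_C_mul_sq (a b : R) (i j k : σ) :
    ((X i - C a * X j) ^ 2 - C b * X k ^ 2 : MvPolynomial σ R).IsHomogeneous 2 :=
  (((isHomogeneous_X R i).sub (isHomogeneous_C_mul_X a j)).pow 2).sub
    (isHomogeneous_C_mul_X_pow b k 2)

section IsDomain

variable [IsDomain R]

theorem IsHomogeneous.eq_zero_of_dvd_of_lt {ρ p : MvPolynomial σ R} {m n : ℕ}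
    (hρ : ρ.IsHomogeneous n) (hp : p.IsHomogeneous m) (hmn : m < n) (hdvd : ρ ∣ p) :
    p = 0 := by
  by_contra hp0
  have hρ0 : ρ ≠ 0 := by
    rintro rfl
    exact hp0 (zero_dvd_iff.mp hdvd)
  have hle := totalDegree_le_of_dvd_of_isDomain hdvd hp0
  rw [hρ.totalDegree hρ0, hp.totalDegree hp0] at hle
  omega

theorem IsHomogeneous.eq_zero_of_X_mul_mem_span_singleton {ρ h : MvPolynomial σ R}
    {m n : ℕ} (i : σ) (hρ : ρ.IsHomogeneous n) (hh : h.IsHomogeneous m) (hmn : m + 1 < n)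
    (hmem : X i * h ∈ Ideal.span {ρ}) : h = 0 := by
  have hXh : X i * h = 0 := hρ.eq_zero_of_dvd_of_lt ((isHomogeneous_X R i).mul hh)
    (by omega) (Ideal.mem_span_singleton.mp hmem)
  exact (mul_eq_zero.mp hXh).resolve_left (X_ne_zero i)

end IsDomain

theorem eq_zero_of_C_mul_mem_span_singleton [NoZeroDivisors R] {ρ P : MvPolynomial σ R}
    {c : R} (v : σ → R) (hρv : eval v ρ = 0) (hPv : eval v P ≠ 0)
    (hmem : C c * P ∈ Ideal.span {ρ}) : c = 0 := by
  obtain ⟨q, hq⟩ := Ideal.mem_span_singleton.mp hmem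
  have hcP : c * eval v P = 0 := by
    simpa [hρv] using congrArg (eval v) hq
  exact (mul_eq_zero.mp hcP).resolve_right hPv

end MvPolynomial

/-- Let `ℓ ≥ 1`, `ρ = z·(z − ℓ²x + ℓy)·∏_{i=1}^{ℓ−1}((z − i²x)² − i²y²)` and
`Π = ∏_{i=1}^{ℓ}((z − i²x)² − i²y²)` in ℚ[x,y,z] (with `x = X 0, y = X 1, z = X 2`).
If `c ∈ ℚ` and `h₁, h₂` are homogeneous of degree `2ℓ − 2` and the three elements
`z·h₁`, `z·h₂`, `c·Π − x²·h₁ − (y² + 2xz)·h₂` all lie in `⟨ρ⟩`, then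
`c = 0`, `h₁ = 0` and `h₂ = 0`. -/
theorem koszul_closed_classes_vanish (ℓ : ℕ) (hℓ : 1 ≤ ℓ)
    (ρ P : MvPolynomial (Fin 3) ℚ)
    (hρ : ρ = X 2 * (X 2 - C ((ℓ : ℚ) ^ 2) * X 0 + C (ℓ : ℚ) * X 1) *
        ∏ i ∈ Icc 1 (ℓ - 1),
          ((X 2 - C ((i : ℚ) ^ 2) * X 0) ^ 2 - C ((i : ℚ) ^ 2) * X 1 ^ 2))
    (hP : P = ∏ i ∈ Icc 1 ℓ,
        ((X 2 - C ((i : ℚ) ^ 2) * X 0) ^ 2 - C ((i : ℚ) ^ 2) * X 1 ^ 2))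
    (c : ℚ) (h₁ h₂ : MvPolynomial (Fin 3) ℚ)
    (hh₁ : h₁.IsHomogeneous (2 * ℓ - 2)) (hh₂ : h₂.IsHomogeneous (2 * ℓ - 2))
    (m₁ : X 2 * h₁ ∈ Ideal.span {ρ})
    (m₂ : X 2 * h₂ ∈ Ideal.span {ρ})
    (m₃ : C c * P - X 0 ^ 2 * h₁ - (X 1 ^ 2 + 2 * X 0 * X 2) * h₂ ∈
      Ideal.span {ρ}) :
    c = 0 ∧ h₁ = 0 ∧ h₂ = 0 := by
  have hρhom : ρ.IsHomogeneous (2 * ℓ) := by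
    have hlin : (X 2 - C ((ℓ : ℚ) ^ 2) * X 0 + C (ℓ : ℚ) * X 1 :
        MvPolynomial (Fin 3) ℚ).IsHomogeneous 1 :=
      ((isHomogeneous_X ℚ 2).sub (isHomogeneous_C_mul_X _ 0)).add (isHomogeneous_C_mul_X _ 1)
    have hprod := IsHomogeneous.prod_of_forall (Icc 1 (ℓ - 1)) _
      fun i _ => isHomogeneous_sq_sub_C_mul_sq ((i : ℚ) ^ 2) ((i : ℚ) ^ 2) (2 : Fin 3) 0 1
    rw [hρ, show 2 * ℓ = 1 + 1 + #(Icc 1 (ℓ - 1)) * 2 by rw [Nat.card_Icc]; omega]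
    exact ((isHomogeneous_X ℚ 2).mul hlin).mul hprod
  have e₁ := hρhom.eq_zero_of_X_mul_mem_span_singleton 2 hh₁ (by omega) m₁
  have e₂ := hρhom.eq_zero_of_X_mul_mem_span_singleton 2 hh₂ (by omega) m₂
  refine ⟨?_, e₁, e₂⟩
  rw [e₁, e₂, mul_zero, mul_zero, sub_zero, sub_zero] at m₃
  refine eq_zero_of_C_mul_mem_span_singleton ![1, 0, 0] (by simp [hρ]) ?_ m₃
  simp only [hP, map_prod, prod_ne_zero_iff, mem_Icc]
  intro i hi
  have hi0 : i ≠ 0 := by omega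
  simp [hi0]
end

section
/- Let k ≥ 1 be an integer and work in the field of rational functions ℚ(x,y). Define five pairs (w₁,w₂): (y^k/x, y), (1/y, 1/(y^k·x)), (y^k·x, 1/y), (y, x/y^{k+1}), (y^{k+1}/x, x/y^k). Then ∑ over these five pairs of (w₁ + w₂)·w₁·w₂ / ((1 − w₁)(1 − w₂)) equals (1/(x·y^k))·( (∑_{j=0}^{2k} y^j) + x·y^{k−1}·(2y + 1) ) − x·(∑_{j=0}^{2k−1} y^{j−k}). -/
open MvPolynomial Finset

/-! With `a = y ^ k` both geometric sums have closed forms, and the identity becomes one between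
rational functions of `x`, `y`, `a`, valid in any field where none of its denominators vanishes.
In `ℚ(x, y)` each denominator is the image of a polynomial that is nonzero at some rational
point. -/

section
variable {K : Type*} [Field K]

def fixedPointTerm (w₁ w₂ : K) : K := (w₁ + w₂) * (w₁ * w₂) / ((1 - w₁) * (1 - w₂))

theorem fixedPointTerm_sum_eq {x y a : K} (hx : x ≠ 0) (hy : y ≠ 0) (ha : a ≠ 0) (hy1 : y ≠ 1)
    (hxa : x ≠ a) (hax : a * x ≠ 1) (hay : a * y ≠ x) :
    fixedPointTerm (a / x) y + fixedPointTerm (1 / y) (1 / (a * x)) +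
          fixedPointTerm (a * x) (1 / y) + fixedPointTerm y (x / (a * y)) +
        fixedPointTerm (a * y / x) (x / a) =
      1 / (x * a) * ((a ^ 2 * y - 1) / (y - 1) + x * (a / y) * (2 * y + 1)) -
        x * ((a ^ 2 - 1) / ((y - 1) * a)) := by
  unfold fixedPointTerm
  field_simp
  ring

theorem geom_sum_range_two_mul_add_one {y : K} (hy1 : y ≠ 1) (k : ℕ) :
    ∑ j ∈ range (2 * k + 1), y ^ j = ((y ^ k) ^ 2 * y - 1) / (y - 1) := by
  rw [geom_sum_eq hy1, ← pow_mul, ← pow_succ, mul_comm]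

theorem sum_range_two_mul_zpow_sub {y : K} (hy : y ≠ 0) (hy1 : y ≠ 1) (k : ℕ) :
    ∑ j ∈ range (2 * k), y ^ ((j : ℤ) - k) = ((y ^ k) ^ 2 - 1) / ((y - 1) * y ^ k) := by
  have hshift (j : ℕ) : y ^ ((j : ℤ) - k) = y ^ j / y ^ k := by
    rw [zpow_sub₀ hy, zpow_natCast, zpow_natCast]
  simp only [hshift, ← sum_div, geom_sum_eq hy1, div_div, ← pow_mul, mul_comm k 2]
end

theorem MvPolynomial.algebraMap_fractionRing_ne {σ R : Type*} [CommRing R] [IsDomain R]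
    {p q : MvPolynomial σ R} (v : σ → R) (h : eval v p ≠ eval v q) :
    algebraMap (MvPolynomial σ R) (FractionRing (MvPolynomial σ R)) p ≠
      algebraMap (MvPolynomial σ R) (FractionRing (MvPolynomial σ R)) q :=
  (IsFractionRing.injective _ _).ne fun hpq => h (congrArg (eval v) hpq)

/-- Atiyah–Bott fixed point computation: in the field ℚ(x,y) (modeled as the
fraction field of `MvPolynomial (Fin 2) ℚ`, with `x`, `y` the images of the two
variables), summing `(w₁ + w₂)·w₁·w₂ / ((1 − w₁)(1 − w₂))` over the five weight
pairs `(y^k/x, y)`, `(1/y, 1/(y^k·x))`, `(y^k·x, 1/y)`, `(y, x/y^{k+1})`,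
`(y^{k+1}/x, x/y^k)` gives
`(1/(x·y^k))·((∑_{j=0}^{2k} y^j) + x·y^{k−1}·(2y + 1)) − x·(∑_{j=0}^{2k−1} y^{j−k})`. -/
theorem atiyah_bott_index_even (k : ℕ) (hk : 1 ≤ k) :
    let K := FractionRing (MvPolynomial (Fin 2) ℚ)
    let x : K := algebraMap (MvPolynomial (Fin 2) ℚ) K (X 0)
    let y : K := algebraMap (MvPolynomial (Fin 2) ℚ) K (X 1)
    let t : K → K → K := fun w₁ w₂ => (w₁ + w₂) * (w₁ * w₂) / ((1 - w₁) * (1 - w₂))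
    t (y ^ k / x) y + t (1 / y) (1 / (y ^ k * x)) + t (y ^ k * x) (1 / y) +
        t y (x / y ^ (k + 1)) + t (y ^ (k + 1) / x) (x / y ^ k) =
      (1 / (x * y ^ k)) *
          ((∑ j ∈ Finset.range (2 * k + 1), y ^ j) + x * y ^ (k - 1) * (2 * y + 1)) -
        x * ∑ j ∈ Finset.range (2 * k), y ^ ((j : ℤ) - (k : ℤ)) := by
  intro K x y t
  have hx : x ≠ 0 := by
    rw [← map_zero (algebraMap (MvPolynomial (Fin 2) ℚ) K)]
    exact algebraMap_fractionRing_ne ![1, 0] (by simp)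
  have hy : y ≠ 0 := by
    rw [← map_zero (algebraMap (MvPolynomial (Fin 2) ℚ) K)]
    exact algebraMap_fractionRing_ne ![0, 1] (by simp)
  have hy1 : y ≠ 1 := by
    rw [← map_one (algebraMap (MvPolynomial (Fin 2) ℚ) K)]
    exact algebraMap_fractionRing_ne ![0, 0] (by simp)
  have hxa : x ≠ y ^ k := by
    rw [← map_pow]
    exact algebraMap_fractionRing_ne ![2, 1] (by simp)
  have hax : y ^ k * x ≠ 1 := by
    rw [← map_pow, ← map_mul, ← map_one (algebraMap (MvPolynomial (Fin 2) ℚ) K)]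
    exact algebraMap_fractionRing_ne ![0, 1] (by simp)
  have hay : y ^ k * y ≠ x := by
    rw [← map_pow, ← map_mul]
    exact algebraMap_fractionRing_ne ![2, 1] (by norm_num)
  rw [geom_sum_range_two_mul_add_one hy1, sum_range_two_mul_zpow_sub hy hy1,
    pow_sub₀ y hy hk, pow_one, ← div_eq_mul_inv, pow_succ]
  exact fixedPointTerm_sum_eq hx hy (pow_ne_zero k hy) hy1 hxa hax hay
end
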